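/- Let a, b > 0 and v ∈ (0, 1) with 1/2 < v < 1. Then ((1 − v)a + v·b)² ≥ (1 − v)²(a − b)² + r₁(√(ab) − b)² + K(√h, 2)^{r̂₁} · (a^{1−v} b^{v})², where h = b/a, r = min{v, 1 − v}, r₁ = min{2r, 1 − 2r} and r̂₁ = min{2r₁, 1 − 2r₁}. -/

import Mathlib

/-!
With `w = 2v - 1`, `x = ab` and `y = b²` one has
`((1 - v)a + vb)² = (1 - v)²(a - b)² + (1 - w)x + wy` and `r₁ = min(w, 1 - w)`, so it suffices
to refine Young's inequality for `x`, `y` twice.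
Subtracting `r₁(√x - √y)²` from `(1 - w)x + wy` leaves a weighted arithmetic mean of `√(xy)` and
one of `x`, `y`, with weight `2r₁` on `√(xy)`. Zuo's Kantorovich refinement of Young's inequality,
`(1 - ν)x + νy ≥ K(y/x)^{min(ν, 1 - ν)} x^{1-ν} y^ν` (weighted AM-GM applied to `x` and `(x + y)/2`,
since `K(y/x) xy = ((x + y)/2)²`), bounds that mean below by `K(√(y/x))^{r̂₁} x^{1-w} y^w`,
which is `K(√h)^{r̂₁} (a^{1-v} b^v)²`.
-/

/-- The Kantorovich constant `K(t, 2) = (t + 1)^2 / (4 t)`. -/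
noncomputable def Kant (t : ℝ) : ℝ := (t + 1) ^ 2 / (4 * t)

open Real

lemma Kant_inv (t : ℝ) : Kant t⁻¹ = Kant t := by
  rcases eq_or_ne t 0 with rfl | ht
  · simp
  · unfold Kant; field_simp; ring

lemma Kant_pos {t : ℝ} (ht : 0 < t) : 0 < Kant t := by
  unfold Kant; positivity

lemma Kant_div_mul_mul {x y : ℝ} (hx : 0 < x) (hy : 0 < y) :
    Kant (y / x) * (x * y) = ((x + y) / 2) ^ 2 := by
  unfold Kant; field_simp; ring

lemma Kant_rpow_mul_geom_mean_le_of_le_half {x y ν : ℝ} (hx : 0 < x) (hy : 0 < y)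
    (hν0 : 0 ≤ ν) (hν : ν ≤ 1 / 2) :
    Kant (y / x) ^ ν * (x ^ (1 - ν) * y ^ ν) ≤ (1 - ν) * x + ν * y := by
  have hm : 0 < (x + y) / 2 := by positivity
  have hK := (Kant_div_mul_mul hx hy).symm
  calc Kant (y / x) ^ ν * (x ^ (1 - ν) * y ^ ν)
      = x ^ (1 - 2 * ν) * ((x + y) / 2) ^ (2 * ν) := by
        rw [show 1 - ν = (1 - 2 * ν) + ν by ring, rpow_add hx,
          show ((x + y) / 2) ^ (2 * ν) = (((x + y) / 2) ^ 2) ^ ν by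
            rw [← rpow_natCast, ← rpow_mul hm.le]; norm_num,
          hK, mul_rpow (Kant_pos (div_pos hy hx)).le (mul_pos hx hy).le, mul_rpow hx.le hy.le]
        ring
    _ ≤ (1 - 2 * ν) * x + 2 * ν * ((x + y) / 2) :=
        geom_mean_le_arith_mean2_weighted (by linarith) (by linarith) hx.le hm.le (by ring)
    _ = (1 - ν) * x + ν * y := by ring

lemma Kant_rpow_mul_geom_mean_le_arith_mean {x y ν : ℝ} (hx : 0 < x) (hy : 0 < y)
    (hν0 : 0 ≤ ν) (hν1 : ν ≤ 1) :
    Kant (y / x) ^ min ν (1 - ν) * (x ^ (1 - ν) * y ^ ν) ≤ (1 - ν) * x + ν * y := by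
  rcases le_total ν (1 / 2) with hν | hν
  · rw [min_eq_left (by linarith)]
    exact Kant_rpow_mul_geom_mean_le_of_le_half hx hy hν0 hν
  · have := Kant_rpow_mul_geom_mean_le_of_le_half hy hx (sub_nonneg.2 hν1) (by linarith)
    rw [min_eq_right (by linarith), ← Kant_inv, inv_div]
    rw [sub_sub_cancel] at this
    linarith

lemma sq_sub_sqrt_add_Kant_rpow_mul_geom_mean_le_of_le_half {x y w : ℝ} (hx : 0 < x)
    (hy : 0 < y) (hw0 : 0 ≤ w) (hw : w ≤ 1 / 2) :
    w * (√x - √y) ^ 2 + Kant √(y / x) ^ min (2 * w) (1 - 2 * w) * (x ^ (1 - w) * y ^ w)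
      ≤ (1 - w) * x + w * y := by
  have hsx : 0 < √x := sqrt_pos.2 hx
  have hsy : 0 < √y := sqrt_pos.2 hy
  have key := Kant_rpow_mul_geom_mean_le_arith_mean hx (mul_pos hsx hsy) (ν := 2 * w)
    (by linarith) (by linarith)
  have hratio : √x * √y / x = √(y / x) := by
    rw [sqrt_div' y hx.le]
    field_simp
    rw [sq_sqrt hx.le]
  have hgeom : x ^ (1 - 2 * w) * (√x * √y) ^ (2 * w) = x ^ (1 - w) * y ^ w := by
    rw [mul_rpow hsx.le hsy.le, sqrt_eq_rpow, sqrt_eq_rpow, ← rpow_mul hx.le, ← rpow_mul hy.le,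
      ← mul_assoc, ← rpow_add hx]
    ring_nf
  have hsq : (√x - √y) ^ 2 = x + y - 2 * (√x * √y) := by
    rw [sub_sq, sq_sqrt hx.le, sq_sqrt hy.le]; ring
  rw [hratio, hgeom] at key
  rw [hsq]
  linarith

lemma sq_sub_sqrt_add_Kant_rpow_mul_geom_mean_le_arith_mean {x y w : ℝ} (hx : 0 < x)
    (hy : 0 < y) (hw0 : 0 ≤ w) (hw1 : w ≤ 1) :
    min w (1 - w) * (√x - √y) ^ 2
      + Kant √(y / x) ^ min (2 * min w (1 - w)) (1 - 2 * min w (1 - w)) * (x ^ (1 - w) * y ^ w)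
      ≤ (1 - w) * x + w * y := by
  rcases le_total w (1 / 2) with hw | hw
  · rw [min_eq_left (by linarith)]
    exact sq_sub_sqrt_add_Kant_rpow_mul_geom_mean_le_of_le_half hx hy hw0 hw
  · have := sq_sub_sqrt_add_Kant_rpow_mul_geom_mean_le_of_le_half hy hx
      (sub_nonneg.2 hw1) (by linarith)
    rw [min_eq_right (by linarith), ← Kant_inv, ← sqrt_inv, inv_div]
    rw [sub_sub_cancel, show (√y - √x) ^ 2 = (√x - √y) ^ 2 by ring] at this
    linarith

theorem stmt_4 (a b v : ℝ) (ha : 0 < a) (hb : 0 < b) (hv0 : 1 / 2 < v) (hv : v < 1)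
    (h r r1 rh1 : ℝ) (hh : h = b / a) (hr : r = min v (1 - v))
    (hr1 : r1 = min (2 * r) (1 - 2 * r)) (hrh1 : rh1 = min (2 * r1) (1 - 2 * r1)) :
    ((1 - v) * a + v * b) ^ 2 ≥
      (1 - v) ^ 2 * (a - b) ^ 2 + r1 * (Real.sqrt (a * b) - b) ^ 2
        + Kant (Real.sqrt h) ^ rh1 * (a ^ (1 - v) * b ^ v) ^ 2 := by
  have hr1w : r1 = min (2 * v - 1) (1 - (2 * v - 1)) := by
    rw [hr1, hr, min_eq_right (a := v) (by linarith), min_comm]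
    congr 1 <;> ring
  have key := sq_sub_sqrt_add_Kant_rpow_mul_geom_mean_le_arith_mean (mul_pos ha hb)
    (pow_pos hb 2) (w := 2 * v - 1) (by linarith) (by linarith)
  have hratio : b ^ 2 / (a * b) = h := by rw [hh]; field_simp
  have hgeom :
      (a * b) ^ (1 - (2 * v - 1)) * (b ^ 2) ^ (2 * v - 1) = (a ^ (1 - v) * b ^ v) ^ 2 := by
    rw [mul_rpow ha.le hb.le, ← rpow_natCast, ← rpow_mul hb.le, mul_assoc, ← rpow_add hb,
      mul_pow, ← rpow_mul_natCast ha.le, ← rpow_mul_natCast hb.le]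
    ring_nf
  rw [← hr1w, ← hrh1, sqrt_sq hb.le, hratio, hgeom] at key
  have hsplit : ((1 - v) * a + v * b) ^ 2
      = (1 - v) ^ 2 * (a - b) ^ 2 + ((1 - (2 * v - 1)) * (a * b) + (2 * v - 1) * b ^ 2) := by
    ring
  linarith
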